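/- For any seminormal quasi-crystals Q₁, Q₂, Q₃ of the same type Φ, the map (x₁ ⊗̈ x₂) ⊗̈ x₃ ↦ x₁ ⊗̈ (x₂ ⊗̈ x₃) (sending ⊥ to ⊥) is a quasi-crystal isomorphism from (Q₁ ⊗̈ Q₂) ⊗̈ Q₃ to Q₁ ⊗̈ (Q₂ ⊗̈ Q₃); in particular the quasi-tensor product of seminormal quasi-crystals is associative. -/

import Mathlib

/-! ## Root system setting -/

/-- The data of a root system `Φ` in a Euclidean space `V`, together with a choice of
simple roots `(α_i)_{i ∈ ι}` and a weight lattice `Λ`, with the integer-valued coroot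
pairing `pair λ i = ⟨λ, α_i^∨⟩ = 2⟪λ, α_i⟫/⟪α_i, α_i⟫` on the weight lattice. -/
structure QCSetting (V : Type*) [NormedAddCommGroup V] [InnerProductSpace ℝ V]
    (ι : Type*) where
  Φ : Set V
  finite : Φ.Finite
  nonempty : Φ.Nonempty
  zero_not_mem : (0 : V) ∉ Φ
  reflect_mem : ∀ a ∈ Φ, ∀ b ∈ Φ, b - (2 * (inner ℝ b a : ℝ) / (inner ℝ a a : ℝ)) • a ∈ Φ
  smul_root : ∀ a ∈ Φ, ∀ k : ℝ, k • a ∈ Φ → k = 1 ∨ k = -1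
  simple : ι → V
  simple_mem : ∀ i, simple i ∈ Φ
  simple_indep : LinearIndependent ℝ simple
  Λ : AddSubgroup V
  lattice_spans : Submodule.span ℝ (Λ : Set V) = ⊤
  root_mem_lattice : ∀ a ∈ Φ, a ∈ Λ
  pair : Λ → ι → ℤ
  pair_spec : ∀ (v : Λ) (i : ι),
    (pair v i : ℝ) = 2 * (inner ℝ (v : V) (simple i) : ℝ) / (inner ℝ (simple i) (simple i) : ℝ)

variable {V : Type*} [NormedAddCommGroup V] [InnerProductSpace ℝ V] {ι : Type*}

/-! ## Quasi-crystals -/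

/-- The structure maps of a quasi-crystal of type `S` on an underlying set `Q`:
a weight map `wt` with values in the weight lattice, partial quasi-Kashiwara operators
`e i, f i : Q → Q ⊔ {⊥}` (realized as `Option`-valued maps, `none` playing the role
of `⊥`), and maps `ε i, φ i : Q → ℤ ∪ {+∞}` (realized as `WithTop ℤ`). -/
structure QC (S : QCSetting V ι) (Q : Type*) where
  wt : Q → S.Λ
  e : ι → Q → Option Q
  f : ι → Q → Option Q
  ε : ι → Q → WithTop ℤ
  φ : ι → Q → WithTop ℤ

/-- `k`-fold iteration of a partial map `g : Q → Option Q` starting at `x`. -/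
def optIter {Q : Type*} (g : Q → Option Q) (k : ℕ) (x : Q) : Option Q :=
  (fun o => o.bind g)^[k] (some x)

/-- The axioms of a seminormal quasi-crystal. -/
structure QC.IsSeminormal {S : QCSetting V ι} {Q : Type*} (𝒬 : QC S Q) : Prop where
  phi_eq : ∀ i x, 𝒬.φ i x = 𝒬.ε i x + ((S.pair (𝒬.wt x) i : ℤ) : WithTop ℤ)
  wt_e : ∀ i x y, 𝒬.e i x = some y → (𝒬.wt y : V) = (𝒬.wt x : V) + S.simple i
  wt_f : ∀ i x y, 𝒬.f i x = some y → (𝒬.wt y : V) = (𝒬.wt x : V) - S.simple i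
  e_iff_f : ∀ i x y, 𝒬.e i x = some y ↔ 𝒬.f i y = some x
  e_of_top : ∀ i x, 𝒬.ε i x = ⊤ → 𝒬.e i x = none
  f_of_top : ∀ i x, 𝒬.ε i x = ⊤ → 𝒬.f i x = none
  eps_spec : ∀ i x, 𝒬.ε i x ≠ ⊤ → ∃ n : ℕ, 𝒬.ε i x = ((n : ℤ) : WithTop ℤ) ∧
    IsGreatest {k : ℕ | (optIter (𝒬.e i) k x).isSome} n
  phi_spec : ∀ i x, 𝒬.ε i x ≠ ⊤ → ∃ n : ℕ, 𝒬.φ i x = ((n : ℤ) : WithTop ℤ) ∧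
    IsGreatest {k : ℕ | (optIter (𝒬.f i) k x).isSome} n

/-- A seminormal crystal is a seminormal quasi-crystal in which `ε i x ≠ +∞` always. -/
def QC.IsSeminormalCrystal {S : QCSetting V ι} {Q : Type*} (𝒬 : QC S Q) : Prop :=
  𝒬.IsSeminormal ∧ ∀ i x, 𝒬.ε i x ≠ ⊤

/-! ## Tensor product -/

/-- The tensor product of two quasi-crystals of the same type. -/
noncomputable def QC.tensor {S : QCSetting V ι} {Q Q' : Type*} (𝒬 : QC S Q) (𝒬' : QC S Q') :
    QC S (Q × Q') where
  wt p := 𝒬.wt p.1 + 𝒬'.wt p.2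
  ε i p := max (𝒬.ε i p.1) (𝒬'.ε i p.2 + ((-(S.pair (𝒬.wt p.1) i) : ℤ) : WithTop ℤ))
  φ i p := max (𝒬.φ i p.1 + ((S.pair (𝒬'.wt p.2) i : ℤ) : WithTop ℤ)) (𝒬'.φ i p.2)
  e i p := if 𝒬'.ε i p.2 ≤ 𝒬.φ i p.1
    then (𝒬.e i p.1).map (fun y => (y, p.2))
    else (𝒬'.e i p.2).map (fun y => (p.1, y))
  f i p := if 𝒬'.ε i p.2 < 𝒬.φ i p.1
    then (𝒬.f i p.1).map (fun y => (y, p.2))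
    else (𝒬'.f i p.2).map (fun y => (p.1, y))

/-! ## Quasi-tensor product -/

/-- The (inverse-free) quasi-tensor product of two quasi-crystals of the same type. -/
noncomputable def QC.qtensor {S : QCSetting V ι} {Q Q' : Type*} (𝒬 : QC S Q) (𝒬' : QC S Q') :
    QC S (Q × Q') where
  wt p := 𝒬.wt p.1 + 𝒬'.wt p.2
  ε i p := if 0 < 𝒬.φ i p.1 ∧ 0 < 𝒬'.ε i p.2 then ⊤
    else max (𝒬.ε i p.1) (𝒬'.ε i p.2 + ((-(S.pair (𝒬.wt p.1) i) : ℤ) : WithTop ℤ))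
  φ i p := if 0 < 𝒬.φ i p.1 ∧ 0 < 𝒬'.ε i p.2 then ⊤
    else max (𝒬.φ i p.1 + ((S.pair (𝒬'.wt p.2) i : ℤ) : WithTop ℤ)) (𝒬'.φ i p.2)
  e i p := if 0 < 𝒬.φ i p.1 ∧ 0 < 𝒬'.ε i p.2 then none
    else if 𝒬'.ε i p.2 ≤ 𝒬.φ i p.1 then (𝒬.e i p.1).map (fun y => (y, p.2))
    else (𝒬'.e i p.2).map (fun y => (p.1, y))
  f i p := if 0 < 𝒬.φ i p.1 ∧ 0 < 𝒬'.ε i p.2 then none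
    else if 𝒬'.ε i p.2 < 𝒬.φ i p.1 then (𝒬.f i p.1).map (fun y => (y, p.2))
    else (𝒬'.f i p.2).map (fun y => (p.1, y))

/-! ## Homomorphisms -/

/-- A quasi-crystal homomorphism `ψ : 𝒬 → 𝒬'`, i.e. a map `Q ⊔ {⊥} → Q' ⊔ {⊥}`
(realized on `Option`s, `none` playing the role of `⊥`) compatible with the structure
maps in the appropriate sense. -/
structure QCHom {S : QCSetting V ι} {Q Q' : Type*} (𝒬 : QC S Q) (𝒬' : QC S Q') where
  toFun : Option Q → Option Q'
  map_none : toFun none = none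
  wt_eq : ∀ x y, toFun (some x) = some y → 𝒬'.wt y = 𝒬.wt x
  eps_eq : ∀ i x y, toFun (some x) = some y → 𝒬'.ε i y = 𝒬.ε i x
  phi_eq : ∀ i x y, toFun (some x) = some y → 𝒬'.φ i y = 𝒬.φ i x
  comm_e : ∀ i x x' y y', 𝒬.e i x = some x' → toFun (some x) = some y →
    toFun (some x') = some y' → 𝒬'.e i y = some y'
  comm_f : ∀ i x x' y y', 𝒬.f i x = some x' → toFun (some x) = some y →
    toFun (some x') = some y' → 𝒬'.f i y = some y'

/-! ## The free `⊗`-quasi-crystal monoid -/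

/-- Weight of a word: the sum of the weights of its letters. -/
def freeWt {S : QCSetting V ι} {Q : Type*} (𝒬 : QC S Q) : List Q → S.Λ
  | [] => 0
  | x :: w => 𝒬.wt x + freeWt 𝒬 w

/-- The map `ε̈_i` of the free `⊗`-quasi-crystal monoid. -/
noncomputable def freeEps {S : QCSetting V ι} {Q : Type*} (𝒬 : QC S Q) (i : ι) : List Q → WithTop ℤ
  | [] => 0
  | x :: w => max (𝒬.ε i x) (freeEps 𝒬 i w + ((-(S.pair (𝒬.wt x) i) : ℤ) : WithTop ℤ))

/-- The map `φ̈_i` of the free `⊗`-quasi-crystal monoid. -/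
noncomputable def freePhi {S : QCSetting V ι} {Q : Type*} (𝒬 : QC S Q) (i : ι) : List Q → WithTop ℤ
  | [] => 0
  | x :: w => max (𝒬.φ i x + ((S.pair (freeWt 𝒬 w) i : ℤ) : WithTop ℤ)) (freePhi 𝒬 i w)

/-- The operator `ë_i` of the free `⊗`-quasi-crystal monoid. -/
noncomputable def freeE {S : QCSetting V ι} {Q : Type*} (𝒬 : QC S Q) (i : ι) : List Q → Option (List Q)
  | [] => none
  | x :: w => if freeEps 𝒬 i w ≤ 𝒬.φ i x
      then (𝒬.e i x).map (· :: w)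
      else (freeE 𝒬 i w).map (x :: ·)

/-- The operator `f̈_i` of the free `⊗`-quasi-crystal monoid. -/
noncomputable def freeF {S : QCSetting V ι} {Q : Type*} (𝒬 : QC S Q) (i : ι) : List Q → Option (List Q)
  | [] => none
  | x :: w => if freeEps 𝒬 i w < 𝒬.φ i x
      then (𝒬.f i x).map (· :: w)
      else (freeF 𝒬 i w).map (x :: ·)

/-- The quasi-crystal structure of the free `⊗`-quasi-crystal monoid `F^⊗(𝒬)`
on the free monoid `Q*`. -/
noncomputable def freeTensorQC {S : QCSetting V ι} {Q : Type*} (𝒬 : QC S Q) : QC S (FreeMonoid Q) where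
  wt w := freeWt 𝒬 (FreeMonoid.toList w)
  ε i w := freeEps 𝒬 i (FreeMonoid.toList w)
  φ i w := freePhi 𝒬 i (FreeMonoid.toList w)
  e i w := (freeE 𝒬 i (FreeMonoid.toList w)).map (fun l => FreeMonoid.ofList l)
  f i w := (freeF 𝒬 i (FreeMonoid.toList w)).map (fun l => FreeMonoid.ofList l)

/-! ## The free `⊗̈`-quasi-crystal monoid -/

/-- The map `ε̈_i` of the free `⊗̈`-quasi-crystal monoid. -/
noncomputable def qfreeEps {S : QCSetting V ι} {Q : Type*} (𝒬 : QC S Q) (i : ι) : List Q → WithTop ℤ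
  | [] => 0
  | x :: w => if 0 < 𝒬.φ i x ∧ 0 < qfreeEps 𝒬 i w then ⊤
      else max (𝒬.ε i x) (qfreeEps 𝒬 i w + ((-(S.pair (𝒬.wt x) i) : ℤ) : WithTop ℤ))

/-- The map `φ̈_i` of the free `⊗̈`-quasi-crystal monoid. -/
noncomputable def qfreePhi {S : QCSetting V ι} {Q : Type*} (𝒬 : QC S Q) (i : ι) : List Q → WithTop ℤ
  | [] => 0
  | x :: w => if 0 < 𝒬.φ i x ∧ 0 < qfreeEps 𝒬 i w then ⊤
      else max (𝒬.φ i x + ((S.pair (freeWt 𝒬 w) i : ℤ) : WithTop ℤ)) (qfreePhi 𝒬 i w)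

/-- The operator `ë_i` of the free `⊗̈`-quasi-crystal monoid. -/
noncomputable def qfreeE {S : QCSetting V ι} {Q : Type*} (𝒬 : QC S Q) (i : ι) : List Q → Option (List Q)
  | [] => none
  | x :: w => if 0 < 𝒬.φ i x ∧ 0 < qfreeEps 𝒬 i w then none
      else if qfreeEps 𝒬 i w ≤ 𝒬.φ i x then (𝒬.e i x).map (· :: w)
      else (qfreeE 𝒬 i w).map (x :: ·)

/-- The operator `f̈_i` of the free `⊗̈`-quasi-crystal monoid. -/
noncomputable def qfreeF {S : QCSetting V ι} {Q : Type*} (𝒬 : QC S Q) (i : ι) : List Q → Option (List Q)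
  | [] => none
  | x :: w => if 0 < 𝒬.φ i x ∧ 0 < qfreeEps 𝒬 i w then none
      else if qfreeEps 𝒬 i w < 𝒬.φ i x then (𝒬.f i x).map (· :: w)
      else (qfreeF 𝒬 i w).map (x :: ·)

/-- The quasi-crystal structure of the free `⊗̈`-quasi-crystal monoid `F^⊗̈(𝒬)`
on the free monoid `Q*`. -/
noncomputable def freeQTensorQC {S : QCSetting V ι} {Q : Type*} (𝒬 : QC S Q) : QC S (FreeMonoid Q) where
  wt w := freeWt 𝒬 (FreeMonoid.toList w)
  ε i w := qfreeEps 𝒬 i (FreeMonoid.toList w)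
  φ i w := qfreePhi 𝒬 i (FreeMonoid.toList w)
  e i w := (qfreeE 𝒬 i (FreeMonoid.toList w)).map (fun l => FreeMonoid.ofList l)
  f i w := (qfreeF 𝒬 i (FreeMonoid.toList w)).map (fun l => FreeMonoid.ofList l)

/-! ## Connected components, plactic and hypoplactic congruences -/

/-- Two elements are connected in the quasi-crystal graph if they are related by the
reflexive-symmetric-transitive closure of the edge relation given by the
quasi-Kashiwara operators. -/
def QC.conn {S : QCSetting V ι} {Q : Type*} (𝒬 : QC S Q) : Q → Q → Prop :=
  Relation.EqvGen (fun x y => ∃ i, 𝒬.f i x = some y ∨ 𝒬.f i y = some x ∨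
    𝒬.e i x = some y ∨ 𝒬.e i y = some x)

/-- The connected component `𝒬(x)` of a quasi-crystal `𝒬` containing `x`, as a
quasi-crystal on the subtype of elements connected with `x`. -/
def QC.compQC {S : QCSetting V ι} {Q : Type*} (𝒬 : QC S Q) (x : Q) :
    QC S {y : Q // 𝒬.conn x y} where
  wt y := 𝒬.wt y.1
  ε i y := 𝒬.ε i y.1
  φ i y := 𝒬.φ i y.1
  e i y := (𝒬.e i y.1).pmap (fun z hz => (⟨z, hz⟩ : {y : Q // 𝒬.conn x y}))
    (fun z hz => Relation.EqvGen.trans _ _ _ y.2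
      (Relation.EqvGen.rel _ _ ⟨i, Or.inr (Or.inr (Or.inl hz))⟩))
  f i y := (𝒬.f i y.1).pmap (fun z hz => (⟨z, hz⟩ : {y : Q // 𝒬.conn x y}))
    (fun z hz => Relation.EqvGen.trans _ _ _ y.2
      (Relation.EqvGen.rel _ _ ⟨i, Or.inl hz⟩))

/-- The plactic congruence: `u ≈ v` iff there is a quasi-crystal isomorphism between the
connected components of `u` and `v` in `F^⊗(𝒬)` mapping `u` to `v`. -/
def placticRel {S : QCSetting V ι} {Q : Type*} (𝒬 : QC S Q)
    (u v : FreeMonoid Q) : Prop :=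
  ∃ ψ : QCHom ((freeTensorQC 𝒬).compQC u) ((freeTensorQC 𝒬).compQC v),
    Function.Bijective ψ.toFun ∧
    ψ.toFun (some ⟨u, Relation.EqvGen.refl u⟩) = some ⟨v, Relation.EqvGen.refl v⟩

/-- The hypoplactic congruence: `u ∼̈ v` iff there is a quasi-crystal isomorphism between
the connected components of `u` and `v` in `F^⊗̈(𝒬)` mapping `u` to `v`. -/
def hypoRel {S : QCSetting V ι} {Q : Type*} (𝒬 : QC S Q)
    (u v : FreeMonoid Q) : Prop :=
  ∃ ψ : QCHom ((freeQTensorQC 𝒬).compQC u) ((freeQTensorQC 𝒬).compQC v),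
    Function.Bijective ψ.toFun ∧
    ψ.toFun (some ⟨u, Relation.EqvGen.refl u⟩) = some ⟨v, Relation.EqvGen.refl v⟩

/-! ## Quasi-crystal monoids -/

/-- A monoid is equidivisible if whenever `x₁y₁ = x₂y₂` one of the factorizations
refines the other. -/
def Equidivisible (M : Type*) [Monoid M] : Prop :=
  ∀ x₁ x₂ y₁ y₂ : M, x₁ * y₁ = x₂ * y₂ →
    ∃ z : M, (x₂ = x₁ * z ∧ y₁ = z * y₂) ∨ (x₁ = x₂ * z ∧ y₂ = z * y₁)

/-- A `⊗`-quasi-crystal monoid: a seminormal quasi-crystal structure on a monoid whose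
structure maps interact with the multiplication by the tensor-product rules. -/
structure IsTensorQCMon {S : QCSetting V ι} {M : Type*} [Monoid M] (𝒬 : QC S M) : Prop where
  seminormal : 𝒬.IsSeminormal
  wt_mul : ∀ x y, 𝒬.wt (x * y) = 𝒬.wt x + 𝒬.wt y
  eps_mul : ∀ i x y, 𝒬.ε i (x * y) =
    max (𝒬.ε i x) (𝒬.ε i y + ((-(S.pair (𝒬.wt x) i) : ℤ) : WithTop ℤ))
  phi_mul : ∀ i x y, 𝒬.φ i (x * y) =
    max (𝒬.φ i x + ((S.pair (𝒬.wt y) i : ℤ) : WithTop ℤ)) (𝒬.φ i y)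
  e_mul : ∀ i x y, 𝒬.e i (x * y) =
    if 𝒬.ε i y ≤ 𝒬.φ i x then (𝒬.e i x).map (· * y) else (𝒬.e i y).map (x * ·)
  f_mul : ∀ i x y, 𝒬.f i (x * y) =
    if 𝒬.ε i y < 𝒬.φ i x then (𝒬.f i x).map (· * y) else (𝒬.f i y).map (x * ·)

/-- A `⊗̈`-quasi-crystal monoid: a seminormal quasi-crystal structure on a monoid such
that `x ⊗̈ y ↦ x·y` induces a quasi-crystal homomorphism `M ⊗̈ M → M`. -/
def IsQTensorQCMon {S : QCSetting V ι} {M : Type*} [Monoid M] (𝒬 : QC S M) : Prop :=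
  𝒬.IsSeminormal ∧
  ∃ ψ : QCHom (𝒬.qtensor 𝒬) 𝒬, ψ.toFun = Option.map (fun p => p.1 * p.2)

/-! ## The bicyclic monoid with zero `B₀` and the monoid `Z₀` -/

/-- The bicyclic monoid `⟨−, + | (+)(−) = ε⟩`: elements are normal forms `(−)^a(+)^b`. -/
structure Bic where
  neg : ℕ
  pos : ℕ
deriving DecidableEq

instance : Mul Bic :=
  ⟨fun x y => ⟨x.neg + (y.neg - x.pos), y.pos + (x.pos - y.neg)⟩⟩

theorem Bic.mul_def (x y : Bic) :
    x * y = ⟨x.neg + (y.neg - x.pos), y.pos + (x.pos - y.neg)⟩ := rfl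

instance : One Bic := ⟨⟨0, 0⟩⟩

theorem Bic.one_def : (1 : Bic) = ⟨0, 0⟩ := rfl

instance : Monoid Bic where
  mul_assoc x y z := by
    simp only [Bic.mul_def, Bic.mk.injEq]
    omega
  one_mul x := by
    simp only [Bic.one_def, Bic.mul_def]
    cases x
    simp only [Bic.mk.injEq]
    omega
  mul_one x := by
    simp only [Bic.one_def, Bic.mul_def]
    cases x
    simp only [Bic.mk.injEq]
    omega

/-- The bicyclic monoid with a zero element adjoined,
`B₀ = ⟨0, −, + | (+)(−) = ε, 0x = x0 = 0⟩`. -/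
abbrev B0 : Type := WithZero Bic

/-- The monoid `Z₀ = ⟨0, −, + | (+)(−) = 0, 0x = x0 = 0⟩`: the nonzero elements are the
normal forms `(−)^a(+)^b`. -/
inductive Z0 : Type
  | zero : Z0
  | word : ℕ → ℕ → Z0
deriving DecidableEq

instance : Mul Z0 :=
  ⟨fun x y => match x, y with
    | Z0.zero, _ => Z0.zero
    | _, Z0.zero => Z0.zero
    | Z0.word a b, Z0.word c d =>
        if 0 < b ∧ 0 < c then Z0.zero else Z0.word (a + c) (b + d)⟩

instance : One Z0 := ⟨Z0.word 0 0⟩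

instance : Zero Z0 := ⟨Z0.zero⟩

theorem Z0.one_def : (1 : Z0) = Z0.word 0 0 := rfl
theorem Z0.zero_def : (0 : Z0) = Z0.zero := rfl
theorem Z0.zero_mul' (x : Z0) : Z0.zero * x = Z0.zero := by cases x <;> rfl
theorem Z0.mul_zero' (x : Z0) : x * Z0.zero = Z0.zero := by cases x <;> rfl
theorem Z0.word_mul_word (a b c d : ℕ) :
    Z0.word a b * Z0.word c d =
      if 0 < b ∧ 0 < c then Z0.zero else Z0.word (a + c) (b + d) := rfl

instance : MonoidWithZero Z0 where
  mul_assoc x y z := by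
    cases x <;> cases y <;> cases z <;>
      simp only [Z0.zero_mul', Z0.mul_zero', Z0.word_mul_word]
    · split_ifs <;> simp_all [Z0.zero_mul', Z0.mul_zero', Z0.word_mul_word] <;>
        split_ifs <;> simp_all <;> omega
  one_mul x := by
    cases x
    · rfl
    · simp [Z0.one_def, Z0.word_mul_word]
  mul_one x := by
    cases x
    · rfl
    · simp [Z0.one_def, Z0.word_mul_word]
  zero_mul x := by cases x <;> rfl
  mul_zero x := by cases x <;> rfl

/-! ## Signature maps -/

/-- The `i`-signature map for the tensor product `⊗`:
`sgn_i^⊗(w) = 0` if `ε̈_i(w) = +∞`, and `(−)^{ε̈_i(w)}(+)^{φ̈_i(w)}` otherwise. -/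
noncomputable def tsgn {V : Type*} [NormedAddCommGroup V] [InnerProductSpace ℝ V] {ι : Type*}
    {S : QCSetting V ι} {Q : Type*} (𝒬 : QC S Q) (i : ι) (w : FreeMonoid Q) : B0 :=
  if freeEps 𝒬 i (FreeMonoid.toList w) = ⊤ then 0
  else ↑(Bic.mk (WithTop.untopD 0 (freeEps 𝒬 i (FreeMonoid.toList w))).toNat
      (WithTop.untopD 0 (freePhi 𝒬 i (FreeMonoid.toList w))).toNat)

/-- The `i`-signature map for the quasi-tensor product `⊗̈`:
`sgn_i^⊗̈(w) = 0` if `ε̈_i(w) = +∞`, and `(−)^{ε̈_i(w)}(+)^{φ̈_i(w)}` otherwise. -/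
noncomputable def qsgn {V : Type*} [NormedAddCommGroup V] [InnerProductSpace ℝ V] {ι : Type*}
    {S : QCSetting V ι} {Q : Type*} (𝒬 : QC S Q) (i : ι) (w : FreeMonoid Q) : Z0 :=
  if qfreeEps 𝒬 i (FreeMonoid.toList w) = ⊤ then 0
  else Z0.word (WithTop.untopD 0 (qfreeEps 𝒬 i (FreeMonoid.toList w))).toNat
      (WithTop.untopD 0 (qfreePhi 𝒬 i (FreeMonoid.toList w))).toNat

/-!
Fix a colour `i` and record an element `x` by its signature `sgn x ∈ Z₀`: `0` if
`ε̈_i(x) = +∞`, and `(−)^ε̈_i(x) (+)^φ̈_i(x)` otherwise. Consider quasi-crystals whose `ε̈_i, φ̈_i`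
take values in `ℕ ∪ {+∞}`, with `φ̈_i = ε̈_i + ⟨wt, α_i^∨⟩` and `ë_i = f̈_i = ⊥` where
`ε̈_i = +∞`; this class contains the seminormal ones and, unlike seminormality, is visibly closed
under `⊗̈`. On it, `sgn (x ⊗̈ x') = sgn x · sgn x'` in the monoid `Z₀`, so `ε̈_i` and `φ̈_i` agree
on both bracketings by associativity of `Z₀`. When `sgn x · sgn x' ≠ 0` nothing cancels, and
`ë_i` acts on the rightmost factor with `ε̈_i > 0` (on the first one if there is none) and `f̈_i`
on the leftmost factor with `φ̈_i > 0` (on the last one if there is none): rules that do not see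
the bracketing either.
-/

theorem QCSetting.pair_add {S : QCSetting V ι} (v w : S.Λ) (i : ι) :
    S.pair (v + w) i = S.pair v i + S.pair w i := by
  have h : ((S.pair (v + w) i : ℤ) : ℝ) = ((S.pair v i + S.pair w i : ℤ) : ℝ) := by
    push_cast
    rw [S.pair_spec, S.pair_spec, S.pair_spec, AddSubgroup.coe_add, inner_add_left]
    ring
  exact_mod_cast h

def QCHom.ofMap {S : QCSetting V ι} {Q Q' : Type*} {𝒬 : QC S Q} {𝒬' : QC S Q'} (g : Q → Q')
    (wt_eq : ∀ x, 𝒬'.wt (g x) = 𝒬.wt x) (eps_eq : ∀ i x, 𝒬'.ε i (g x) = 𝒬.ε i x)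
    (phi_eq : ∀ i x, 𝒬'.φ i (g x) = 𝒬.φ i x) (map_e : ∀ i x, (𝒬.e i x).map g = 𝒬'.e i (g x))
    (map_f : ∀ i x, (𝒬.f i x).map g = 𝒬'.f i (g x)) : QCHom 𝒬 𝒬' where
  toFun := Option.map g
  map_none := rfl
  wt_eq := by
    rintro x _ ⟨⟩
    exact wt_eq x
  eps_eq := by
    rintro i x _ ⟨⟩
    exact eps_eq i x
  phi_eq := by
    rintro i x _ ⟨⟩
    exact phi_eq i x
  comm_e := by
    rintro i x x' _ _ hx ⟨⟩ ⟨⟩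
    rw [← map_e, hx, Option.map_some]
  comm_f := by
    rintro i x x' _ _ hx ⟨⟩ ⟨⟩
    rw [← map_f, hx, Option.map_some]

namespace Z0

def eps : Z0 → WithTop ℤ
  | zero => ⊤
  | word a _ => ((a : ℤ) : WithTop ℤ)

def phi : Z0 → WithTop ℤ
  | zero => ⊤
  | word _ b => ((b : ℤ) : WithTop ℤ)

@[simp] theorem eps_zero : (0 : Z0).eps = ⊤ := rfl

@[simp] theorem phi_zero : (0 : Z0).phi = ⊤ := rfl

theorem eps_eq_top_iff {s : Z0} : s.eps = ⊤ ↔ s = 0 := by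
  cases s <;> simp [eps, zero_def]

theorem word_mul_word_of_ne_zero {a b c d : ℕ} (h : word a b * word c d ≠ 0) :
    word a b * word c d = word (a + c) (b + d) := by
  rw [word_mul_word] at h ⊢
  exact if_neg fun hbc => h (if_pos hbc)

theorem eps_mul_eq_zero_iff {s t : Z0} (h : s * t ≠ 0) :
    (s * t).eps = 0 ↔ s.eps = 0 ∧ t.eps = 0 := by
  rcases s with _ | ⟨a, b⟩
  · exact absurd (zero_mul t) h
  rcases t with _ | ⟨c, d⟩
  · exact absurd (mul_zero _) h
  rw [word_mul_word_of_ne_zero h]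
  simp only [eps, WithTop.coe_eq_zero]
  omega

theorem phi_mul_pos_iff {s t : Z0} (h : s * t ≠ 0) :
    0 < (s * t).phi ↔ 0 < s.phi ∨ 0 < t.phi := by
  rcases s with _ | ⟨a, b⟩
  · exact absurd (zero_mul t) h
  rcases t with _ | ⟨c, d⟩
  · exact absurd (mul_zero _) h
  rw [word_mul_word_of_ne_zero h]
  simp only [phi, ← WithTop.coe_zero, WithTop.coe_lt_coe]
  omega

end Z0

namespace QC

variable {S : QCSetting V ι} {Q Q' : Type*}

def sgn (𝒬 : QC S Q) (i : ι) (x : Q) : Z0 :=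
  if 𝒬.ε i x = ⊤ then 0
  else Z0.word (WithTop.untopD 0 (𝒬.ε i x)).toNat (WithTop.untopD 0 (𝒬.φ i x)).toNat

theorem sgn_eq {𝒬 : QC S Q} {i : ι} {x : Q} {s : Z0} (hε : 𝒬.ε i x = s.eps)
    (hφ : 𝒬.φ i x = s.phi) : 𝒬.sgn i x = s := by
  cases s <;> simp only [sgn, hε, hφ, Z0.eps, Z0.phi, Z0.zero_def, WithTop.untopD_coe,
    Int.toNat_natCast, if_true, if_false, WithTop.coe_ne_top]

structure IsWeaklySeminormal (𝒬 : QC S Q) : Prop where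
  phi_eq : ∀ i x, 𝒬.φ i x = 𝒬.ε i x + ((S.pair (𝒬.wt x) i : ℤ) : WithTop ℤ)
  exists_natCast : ∀ i x, 𝒬.ε i x ≠ ⊤ →
    ∃ a b : ℕ, 𝒬.ε i x = ((a : ℤ) : WithTop ℤ) ∧ 𝒬.φ i x = ((b : ℤ) : WithTop ℤ)
  e_of_top : ∀ i x, 𝒬.ε i x = ⊤ → 𝒬.e i x = none
  f_of_top : ∀ i x, 𝒬.ε i x = ⊤ → 𝒬.f i x = none

theorem IsSeminormal.isWeaklySeminormal {𝒬 : QC S Q} (h : 𝒬.IsSeminormal) :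
    𝒬.IsWeaklySeminormal where
  phi_eq := h.phi_eq
  exists_natCast i x hx := by
    obtain ⟨a, ha, -⟩ := h.eps_spec i x hx
    obtain ⟨b, hb, -⟩ := h.phi_spec i x hx
    exact ⟨a, b, ha, hb⟩
  e_of_top := h.e_of_top
  f_of_top := h.f_of_top

namespace IsWeaklySeminormal

variable {𝒬 : QC S Q} {𝒬' : QC S Q'}

theorem sgn_cases (h : 𝒬.IsWeaklySeminormal) (i : ι) (x : Q) :
    (𝒬.ε i x = ⊤ ∧ 𝒬.φ i x = ⊤ ∧ 𝒬.sgn i x = 0) ∨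
      ∃ a b : ℕ, 𝒬.ε i x = ((a : ℤ) : WithTop ℤ) ∧ 𝒬.φ i x = ((b : ℤ) : WithTop ℤ) ∧
        𝒬.sgn i x = Z0.word a b ∧ S.pair (𝒬.wt x) i = b - a := by
  by_cases hx : 𝒬.ε i x = ⊤
  · exact Or.inl ⟨hx, by rw [h.phi_eq, hx, top_add], by simp [sgn, hx]⟩
  obtain ⟨a, b, ha, hb⟩ := h.exists_natCast i x hx
  refine Or.inr ⟨a, b, ha, hb, sgn_eq ha hb, ?_⟩
  have hp := h.phi_eq i x
  rw [ha, hb, ← WithTop.coe_add, WithTop.coe_inj] at hp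
  omega

theorem eps_eq_sgn_eps (h : 𝒬.IsWeaklySeminormal) (i : ι) (x : Q) :
    𝒬.ε i x = (𝒬.sgn i x).eps := by
  rcases h.sgn_cases i x with ⟨hε, -, hs⟩ | ⟨a, b, hε, -, hs, -⟩ <;> simp [hε, hs, Z0.eps]

theorem phi_eq_sgn_phi (h : 𝒬.IsWeaklySeminormal) (i : ι) (x : Q) :
    𝒬.φ i x = (𝒬.sgn i x).phi := by
  rcases h.sgn_cases i x with ⟨-, hφ, hs⟩ | ⟨a, b, -, hφ, hs, -⟩ <;> simp [hφ, hs, Z0.phi]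

theorem qtensor_eps (h : 𝒬.IsWeaklySeminormal) (h' : 𝒬'.IsWeaklySeminormal) (i : ι) (x : Q)
    (x' : Q') : (𝒬.qtensor 𝒬').ε i (x, x') = (𝒬.sgn i x * 𝒬'.sgn i x').eps := by
  rcases h.sgn_cases i x with ⟨hε, hφ, hs⟩ | ⟨a, b, hε, hφ, hs, hp⟩
  · simp [qtensor, hε, hφ, hs]
  rcases h'.sgn_cases i x' with ⟨hε', -, hs'⟩ | ⟨c, d, hε', -, hs', -⟩
  · simp [qtensor, hε, hφ, hs, hε', hs']
  simp only [qtensor, hε, hφ, hs, hε', hs', hp, Z0.word_mul_word, ← WithTop.coe_zero,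
    WithTop.coe_lt_coe, Nat.cast_pos]
  split_ifs with hbc
  · rfl
  · simp only [Z0.eps, ← WithTop.coe_add, ← WithTop.coe_max, WithTop.coe_inj]
    omega

theorem qtensor_phi (h : 𝒬.IsWeaklySeminormal) (h' : 𝒬'.IsWeaklySeminormal) (i : ι) (x : Q)
    (x' : Q') : (𝒬.qtensor 𝒬').φ i (x, x') = (𝒬.sgn i x * 𝒬'.sgn i x').phi := by
  rcases h.sgn_cases i x with ⟨-, hφ, hs⟩ | ⟨a, b, -, hφ, hs, -⟩
  · simp [qtensor, hφ, hs]
  rcases h'.sgn_cases i x' with ⟨hε', hφ', hs'⟩ | ⟨c, d, hε', hφ', hs', hp'⟩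
  · simp [qtensor, hφ, hs, hε', hφ', hs']
  simp only [qtensor, hφ, hs, hε', hφ', hs', hp', Z0.word_mul_word, ← WithTop.coe_zero,
    WithTop.coe_lt_coe, Nat.cast_pos]
  split_ifs with hbc
  · rfl
  · simp only [Z0.phi, ← WithTop.coe_add, ← WithTop.coe_max, WithTop.coe_inj]
    omega

theorem qtensor_sgn (h : 𝒬.IsWeaklySeminormal) (h' : 𝒬'.IsWeaklySeminormal) (i : ι) (x : Q)
    (x' : Q') : (𝒬.qtensor 𝒬').sgn i (x, x') = 𝒬.sgn i x * 𝒬'.sgn i x' :=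
  sgn_eq (h.qtensor_eps h' i x x') (h.qtensor_phi h' i x x')

theorem qtensor_e (h : 𝒬.IsWeaklySeminormal) (h' : 𝒬'.IsWeaklySeminormal) (i : ι) (x : Q)
    (x' : Q') : (𝒬.qtensor 𝒬').e i (x, x') =
      if 𝒬.sgn i x * 𝒬'.sgn i x' = 0 then none
      else if 𝒬'.ε i x' = 0 then (𝒬.e i x).map (·, x') else (𝒬'.e i x').map (x, ·) := by
  rcases h.sgn_cases i x with ⟨hε, hφ, hs⟩ | ⟨a, b, -, hφ, hs, -⟩
  · simp [qtensor, hφ, hs, h.e_of_top i x hε]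
  rcases h'.sgn_cases i x' with ⟨hε', -, hs'⟩ | ⟨c, d, hε', -, hs', -⟩
  · simp [qtensor, hφ, hs, hε', hs', h'.e_of_top i x' hε']
  simp only [qtensor, hφ, hs, hε', hs', Z0.word_mul_word, ← WithTop.coe_zero,
    WithTop.coe_lt_coe, WithTop.coe_le_coe, WithTop.coe_inj, Nat.cast_pos]
  split_ifs <;> first | rfl | simp_all [Z0.zero_def]

theorem qtensor_f (h : 𝒬.IsWeaklySeminormal) (h' : 𝒬'.IsWeaklySeminormal) (i : ι) (x : Q)
    (x' : Q') : (𝒬.qtensor 𝒬').f i (x, x') =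
      if 𝒬.sgn i x * 𝒬'.sgn i x' = 0 then none
      else if 0 < 𝒬.φ i x then (𝒬.f i x).map (·, x') else (𝒬'.f i x').map (x, ·) := by
  rcases h.sgn_cases i x with ⟨hε, hφ, hs⟩ | ⟨a, b, -, hφ, hs, -⟩
  · simp [qtensor, hφ, hs, h.f_of_top i x hε]
    exact fun _ htop => h'.f_of_top i x' htop
  rcases h'.sgn_cases i x' with ⟨hε', -, hs'⟩ | ⟨c, d, hε', -, hs', -⟩
  · simp [qtensor, hφ, hs, hε', hs', h'.f_of_top i x' hε']
  simp only [qtensor, hφ, hs, hε', hs', Z0.word_mul_word, ← WithTop.coe_zero,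
    WithTop.coe_lt_coe, Nat.cast_pos]
  split_ifs <;> first | rfl | simp_all [Z0.zero_def]

protected theorem qtensor (h : 𝒬.IsWeaklySeminormal) (h' : 𝒬'.IsWeaklySeminormal) :
    (𝒬.qtensor 𝒬').IsWeaklySeminormal where
  phi_eq := by
    rintro i ⟨x, x'⟩
    rw [h.qtensor_eps h', h.qtensor_phi h', show (𝒬.qtensor 𝒬').wt (x, x') = 𝒬.wt x + 𝒬'.wt x'
      from rfl, S.pair_add]
    rcases h.sgn_cases i x with ⟨-, -, hs⟩ | ⟨a, b, -, -, hs, hp⟩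
    · simp [hs]
    rcases h'.sgn_cases i x' with ⟨-, -, hs'⟩ | ⟨c, d, -, -, hs', hp'⟩
    · simp [hs']
    rw [hs, hs', hp, hp', Z0.word_mul_word]
    split_ifs
    · rfl
    · simp only [Z0.eps, Z0.phi, ← WithTop.coe_add, WithTop.coe_inj]
      omega
  exists_natCast := by
    rintro i ⟨x, x'⟩ hx
    rw [h.qtensor_eps h'] at hx ⊢
    rw [h.qtensor_phi h']
    generalize 𝒬.sgn i x * 𝒬'.sgn i x' = s at hx ⊢
    rcases s with _ | ⟨a, b⟩
    · exact absurd rfl hx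
    · exact ⟨a, b, rfl, rfl⟩
  e_of_top := by
    rintro i ⟨x, x'⟩ hx
    rw [h.qtensor_eps h', Z0.eps_eq_top_iff] at hx
    rw [h.qtensor_e h', if_pos hx]
  f_of_top := by
    rintro i ⟨x, x'⟩ hx
    rw [h.qtensor_eps h', Z0.eps_eq_top_iff] at hx
    rw [h.qtensor_f h', if_pos hx]

variable {Q₁ Q₂ Q₃ : Type*} {𝒬₁ : QC S Q₁} {𝒬₂ : QC S Q₂} {𝒬₃ : QC S Q₃}

theorem qtensor_assoc_eps (h₁ : 𝒬₁.IsWeaklySeminormal) (h₂ : 𝒬₂.IsWeaklySeminormal)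
    (h₃ : 𝒬₃.IsWeaklySeminormal) (i : ι) (p : (Q₁ × Q₂) × Q₃) :
    (𝒬₁.qtensor (𝒬₂.qtensor 𝒬₃)).ε i (Equiv.prodAssoc Q₁ Q₂ Q₃ p) =
      ((𝒬₁.qtensor 𝒬₂).qtensor 𝒬₃).ε i p := by
  obtain ⟨⟨x₁, x₂⟩, x₃⟩ := p
  rw [Equiv.prodAssoc_apply, h₁.qtensor_eps (h₂.qtensor h₃), (h₁.qtensor h₂).qtensor_eps h₃,
    h₁.qtensor_sgn h₂, h₂.qtensor_sgn h₃, mul_assoc]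

theorem qtensor_assoc_phi (h₁ : 𝒬₁.IsWeaklySeminormal) (h₂ : 𝒬₂.IsWeaklySeminormal)
    (h₃ : 𝒬₃.IsWeaklySeminormal) (i : ι) (p : (Q₁ × Q₂) × Q₃) :
    (𝒬₁.qtensor (𝒬₂.qtensor 𝒬₃)).φ i (Equiv.prodAssoc Q₁ Q₂ Q₃ p) =
      ((𝒬₁.qtensor 𝒬₂).qtensor 𝒬₃).φ i p := by
  obtain ⟨⟨x₁, x₂⟩, x₃⟩ := p
  rw [Equiv.prodAssoc_apply, h₁.qtensor_phi (h₂.qtensor h₃), (h₁.qtensor h₂).qtensor_phi h₃,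
    h₁.qtensor_sgn h₂, h₂.qtensor_sgn h₃, mul_assoc]

theorem qtensor_assoc_e (h₁ : 𝒬₁.IsWeaklySeminormal) (h₂ : 𝒬₂.IsWeaklySeminormal)
    (h₃ : 𝒬₃.IsWeaklySeminormal) (i : ι) (p : (Q₁ × Q₂) × Q₃) :
    (((𝒬₁.qtensor 𝒬₂).qtensor 𝒬₃).e i p).map (Equiv.prodAssoc Q₁ Q₂ Q₃) =
      (𝒬₁.qtensor (𝒬₂.qtensor 𝒬₃)).e i (Equiv.prodAssoc Q₁ Q₂ Q₃ p) := by
  obtain ⟨⟨x₁, x₂⟩, x₃⟩ := p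
  rw [Equiv.prodAssoc_apply, h₁.qtensor_e (h₂.qtensor h₃), (h₁.qtensor h₂).qtensor_e h₃,
    h₁.qtensor_e h₂, h₂.qtensor_e h₃, h₁.qtensor_sgn h₂, h₂.qtensor_sgn h₃,
    h₂.qtensor_eps h₃, ← mul_assoc]
  dsimp only
  by_cases h₁₂₃ : 𝒬₁.sgn i x₁ * 𝒬₂.sgn i x₂ * 𝒬₃.sgn i x₃ = 0
  · simp [h₁₂₃]
  have h₁₂ := left_ne_zero_of_mul h₁₂₃
  have h₂₃ := right_ne_zero_of_mul (mul_assoc (𝒬₁.sgn i x₁) _ _ ▸ h₁₂₃)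
  simp only [h₁₂₃, h₁₂, h₂₃, if_false, Z0.eps_mul_eq_zero_iff h₂₃, ← h₂.eps_eq_sgn_eps,
    ← h₃.eps_eq_sgn_eps]
  split_ifs <;> simp_all [Option.map_map, Function.comp_def]

theorem qtensor_assoc_f (h₁ : 𝒬₁.IsWeaklySeminormal) (h₂ : 𝒬₂.IsWeaklySeminormal)
    (h₃ : 𝒬₃.IsWeaklySeminormal) (i : ι) (p : (Q₁ × Q₂) × Q₃) :
    (((𝒬₁.qtensor 𝒬₂).qtensor 𝒬₃).f i p).map (Equiv.prodAssoc Q₁ Q₂ Q₃) =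
      (𝒬₁.qtensor (𝒬₂.qtensor 𝒬₃)).f i (Equiv.prodAssoc Q₁ Q₂ Q₃ p) := by
  obtain ⟨⟨x₁, x₂⟩, x₃⟩ := p
  rw [Equiv.prodAssoc_apply, h₁.qtensor_f (h₂.qtensor h₃), (h₁.qtensor h₂).qtensor_f h₃,
    h₁.qtensor_f h₂, h₂.qtensor_f h₃, h₁.qtensor_sgn h₂, h₂.qtensor_sgn h₃,
    h₁.qtensor_phi h₂, ← mul_assoc]
  dsimp only
  by_cases h₁₂₃ : 𝒬₁.sgn i x₁ * 𝒬₂.sgn i x₂ * 𝒬₃.sgn i x₃ = 0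
  · simp [h₁₂₃]
  have h₁₂ := left_ne_zero_of_mul h₁₂₃
  have h₂₃ := right_ne_zero_of_mul (mul_assoc (𝒬₁.sgn i x₁) _ _ ▸ h₁₂₃)
  simp only [h₁₂₃, h₁₂, h₂₃, if_false, Z0.phi_mul_pos_iff h₁₂, ← h₁.phi_eq_sgn_phi,
    ← h₂.phi_eq_sgn_phi]
  split_ifs <;> simp_all [Option.map_map, Function.comp_def]

end IsWeaklySeminormal

end QC

/-- The map `(x₁ ⊗̈ x₂) ⊗̈ x₃ ↦ x₁ ⊗̈ (x₂ ⊗̈ x₃)` (sending `⊥` to `⊥`)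
is a quasi-crystal isomorphism `(Q₁ ⊗̈ Q₂) ⊗̈ Q₃ → Q₁ ⊗̈ (Q₂ ⊗̈ Q₃)`; in particular the
quasi-tensor product of seminormal quasi-crystals is associative. -/
theorem qtensor_assoc {V : Type*} [NormedAddCommGroup V] [InnerProductSpace ℝ V]
    {ι : Type*} {S : QCSetting V ι} {Q₁ Q₂ Q₃ : Type*}
    (𝒬₁ : QC S Q₁) (𝒬₂ : QC S Q₂) (𝒬₃ : QC S Q₃)
    (h₁ : 𝒬₁.IsSeminormal) (h₂ : 𝒬₂.IsSeminormal) (h₃ : 𝒬₃.IsSeminormal) :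
    ∃ ψ : QCHom ((𝒬₁.qtensor 𝒬₂).qtensor 𝒬₃) (𝒬₁.qtensor (𝒬₂.qtensor 𝒬₃)),
      ψ.toFun = Option.map (fun p => (p.1.1, (p.1.2, p.2))) ∧
      Function.Bijective ψ.toFun := by
  replace h₁ := h₁.isWeaklySeminormal
  replace h₂ := h₂.isWeaklySeminormal
  replace h₃ := h₃.isWeaklySeminormal
  refine ⟨QCHom.ofMap (Equiv.prodAssoc Q₁ Q₂ Q₃) (fun _ => (add_assoc _ _ _).symm)
    (h₁.qtensor_assoc_eps h₂ h₃) (h₁.qtensor_assoc_phi h₂ h₃) (h₁.qtensor_assoc_e h₂ h₃)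
    (h₁.qtensor_assoc_f h₂ h₃), rfl, (Equiv.optionCongr (Equiv.prodAssoc Q₁ Q₂ Q₃)).bijective⟩
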